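/- arXiv:2309.14501 — 2 statements merged into one kernel-verified Lean document; each statement's English description precedes it below -/
import Mathlib

section
/- Let n = ab where a and b are positive integers with gcd(a, b) = 1. Then for every non-negative integer k, z^k(n) = lcm( z^k(a), z^k(b) ). -/
/-- The order of appearance of `n` in the Fibonacci sequence: the smallest
positive integer `ℓ` such that `n` divides the `ℓ`-th Fibonacci number. -/
noncomputable def z (n : ℕ) : ℕ := sInf {ℓ : ℕ | 0 < ℓ ∧ n ∣ Nat.fib ℓ}

/-!
For every `n` and `ℓ`, `n ∣ F_ℓ ↔ z n ∣ ℓ`. When `n ≠ 0` some `F_ℓ` with `ℓ > 0` is divisible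
by `n`, because `(x, y) ↦ (y, x + y)` permutes the finite set `(ℤ/n)²` and so has finite order;
since `F` is a strong divisibility sequence (`gcd F_a F_b = F_(gcd a b)`), the least such `ℓ`
divides all others. (For `n = 0` both sides say `ℓ = 0`, as `z 0 = sInf ∅ = 0`.) Hence
`lcm m n ∣ F_ℓ ↔ lcm (z m) (z n) ∣ ℓ`, i.e. `z (lcm m n) = lcm (z m) (z n)`, which iterates,
and `a * b = lcm a b` for coprime `a, b`.
-/

def fibShift (R : Type*) [Ring R] : Equiv.Perm (R × R) where
  toFun p := (p.2, p.1 + p.2)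
  invFun p := (p.2 - p.1, p.1)
  left_inv p := by simp
  right_inv p := by simp

lemma fibShift_pow_apply_zero_one (R : Type*) [Ring R] (i : ℕ) :
    (fibShift R ^ i) (0, 1) = ((Nat.fib i : R), (Nat.fib (i + 1) : R)) := by
  induction i with
  | zero => simp
  | succ i ih =>
    rw [pow_succ', Equiv.Perm.mul_apply, ih]
    simp [fibShift, Nat.fib_add_two]

lemma exists_pos_fib_dvd {n : ℕ} (hn : n ≠ 0) : ∃ ℓ, 0 < ℓ ∧ n ∣ Nat.fib ℓ := by
  have : NeZero n := ⟨hn⟩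
  refine ⟨orderOf (fibShift (ZMod n)), orderOf_pos _, ?_⟩
  have h := congrArg Prod.fst (fibShift_pow_apply_zero_one (ZMod n) (orderOf (fibShift (ZMod n))))
  rw [pow_orderOf_eq_one] at h
  exact (ZMod.natCast_eq_zero_iff _ _).mp h.symm

lemma Nat.IsStrongDvdSequence.dvd_iff_sInf_dvd {f : ℕ → ℕ} (hf : Nat.IsStrongDvdSequence f)
    {n : ℕ} (hn : ∃ ℓ, 0 < ℓ ∧ n ∣ f ℓ) (ℓ : ℕ) :
    n ∣ f ℓ ↔ sInf {ℓ | 0 < ℓ ∧ n ∣ f ℓ} ∣ ℓ := by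
  obtain ⟨hr_pos, hr⟩ := Nat.sInf_mem hn
  set r := sInf {ℓ | 0 < ℓ ∧ n ∣ f ℓ}
  refine ⟨fun h => ?_, fun h => hr.trans (hf.isDvdSequence _ _ h)⟩
  rcases ℓ.eq_zero_or_pos with rfl | hℓ
  · exact dvd_zero r
  -- the set is closed under `gcd`, so its least element divides each of its members
  have hgcd : n ∣ f (r.gcd ℓ) := hf r ℓ ▸ Nat.dvd_gcd hr h
  have hle : r ≤ r.gcd ℓ := Nat.sInf_le ⟨Nat.gcd_pos_of_pos_right r hℓ, hgcd⟩
  rw [← Nat.gcd_eq_left_iff_dvd]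
  exact le_antisymm (Nat.gcd_le_left ℓ hr_pos) hle

lemma z_zero : z 0 = 0 := by
  simp [z, Nat.pos_iff_ne_zero]

lemma dvd_fib_iff_z_dvd (n ℓ : ℕ) : n ∣ Nat.fib ℓ ↔ z n ∣ ℓ := by
  rcases eq_or_ne n 0 with rfl | hn
  · simp [z_zero]
  · exact Nat.isStrongDvdSequence_fib.dvd_iff_sInf_dvd (exists_pos_fib_dvd hn) ℓ

lemma z_lcm (m n : ℕ) : z (m.lcm n) = (z m).lcm (z n) :=
  Nat.dvd_right_iff_eq.mp fun ℓ => by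
    simp only [← dvd_fib_iff_z_dvd, Nat.lcm_dvd_iff]

lemma z_iterate_lcm (k m n : ℕ) : z^[k] (m.lcm n) = (z^[k] m).lcm (z^[k] n) := by
  induction k generalizing m n with
  | zero => rfl
  | succ k ih => simp only [Function.iterate_succ_apply, z_lcm, ih]

theorem z_iter_coprime_mul_general (a b : ℕ)
    (hab : Nat.gcd a b = 1) (k : ℕ) :
    z^[k] (a * b) = Nat.lcm (z^[k] a) (z^[k] b) := by
  rw [← Nat.Coprime.lcm_eq_mul hab, z_iterate_lcm]

theorem z_iter_coprime_mul (a b : ℕ) (ha : 0 < a) (hb : 0 < b)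
    (hab : Nat.gcd a b = 1) (k : ℕ) :
    z^[k] (a * b) = Nat.lcm (z^[k] a) (z^[k] b) :=
  z_iter_coprime_mul_general a b hab k
end

section
/- For every positive integer n, there exists a non-negative integer k such that z^k(n) is a fixed point of z, i.e., z( z^k(n) ) = z^k(n); hence every positive integer has finite fixed point order. -/
open Function Polynomial
open Nat (fib)

namespace Function

variable {α : Type*} {f : α → α} {x : α}

def ReachesFixedPt (f : α → α) (x : α) : Prop := ∃ k, IsFixedPt f (f^[k] x)

theorem IsFixedPt.reachesFixedPt (h : IsFixedPt f x) : ReachesFixedPt f x := ⟨0, h⟩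

theorem ReachesFixedPt.of_apply (h : ReachesFixedPt f (f x)) : ReachesFixedPt f x :=
  let ⟨k, hk⟩ := h
  ⟨k + 1, by rwa [iterate_succ_apply]⟩

end Function

-- Stated for `Int.fib` so that `F_{k-1}` needs no case split at `k = 0`.
theorem Int.fib_mul_succ_modEq (k : ℤ) (t : ℕ) :
    fib (k * (t + 1) - 1) ≡ fib (k - 1) ^ (t + 1) [ZMOD fib k] ∧
      fib (k * (t + 1)) ≡ (t + 1) * fib k * fib (k - 1) ^ t [ZMOD fib k ^ 2] := by
  induction t with
  | zero => simp [Int.ModEq.refl]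
  | succ t ih =>
    obtain ⟨a, ha⟩ := ih.1.symm.dvd
    obtain ⟨b, hb⟩ := ih.2.symm.dvd
    have hpred : fib (k * (↑(t + 1) + 1) - 1)
        = fib (k * (t + 1) - 1) * fib (k - 1) + fib (k * (t + 1)) * fib k := by
      rw [show k * (↑(t + 1) + 1) - 1 = k * (t + 1) + (k - 1) by push_cast; ring, fib_add,
        sub_add_cancel]
    have hfib : fib (k * (↑(t + 1) + 1))
        = fib (k * (t + 1) - 1) * fib k + fib (k * (t + 1)) * (fib (k - 1) + fib k) := by
      have hsucc := fib_add_two (k - 1)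
      rw [show k - 1 + 2 = k + 1 by ring, sub_add_cancel] at hsucc
      rw [show k * (↑(t + 1) + 1) = k * (t + 1) + k by push_cast; ring, fib_add, hsucc]
    refine ⟨(Int.modEq_of_dvd ⟨a * fib (k - 1) + fib (k * (t + 1)), ?_⟩).symm,
      (Int.modEq_of_dvd ⟨a + b * (fib (k - 1) + fib k) + (t + 1) * fib (k - 1) ^ t, ?_⟩).symm⟩
    · rw [hpred]; linear_combination fib (k - 1) * ha
    · rw [hfib]; push_cast; linear_combination fib k * ha + (fib (k - 1) + fib k) * hb

theorem Nat.mul_dvd_fib_mul {n k : ℕ} (p : ℕ) (hn : n ∣ fib k) (hp : p ∣ n) :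
    p * n ∣ fib (p * k) := by
  obtain _ | t := p
  · obtain rfl := Nat.eq_zero_of_zero_dvd hp
    simp
  have hcong := (Int.fib_mul_succ_modEq k t).2.symm.dvd
  rw [show (k : ℤ) * (t + 1) = ((t + 1) * k : ℕ) by push_cast; ring, Int.fib_natCast] at hcong
  have hn' : (n : ℤ) ∣ fib k := by exact_mod_cast hn
  have hp' : ((t + 1 : ℕ) : ℤ) ∣ n := by exact_mod_cast hp
  have hsq : ((t + 1 : ℕ) * n : ℤ) ∣ (fib k : ℤ) ^ 2 :=
    (mul_dvd_mul hp' dvd_rfl).trans (sq (fib k : ℤ) ▸ mul_dvd_mul hn' hn')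
  have hlin : ((t + 1 : ℕ) * n : ℤ) ∣ (t + 1) * fib k * Int.fib (k - 1) ^ t := by
    push_cast
    exact (mul_dvd_mul_left _ hn').mul_right _
  have h := dvd_add (hsq.trans hcong) hlin
  rw [sub_add_cancel, Int.fib_natCast] at h
  exact_mod_cast h

theorem Nat.cast_fib_mul_sub_eq_pow_sub_pow {R : Type*} [CommRing R] {α β : R} (hsum : α + β = 1)
    (hprod : α * β = -1) (n : ℕ) : (fib n : R) * (α - β) = α ^ n - β ^ n := by
  have hα : α ^ 2 = α + 1 := by linear_combination α * hsum - hprod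
  have hβ : β ^ 2 = β + 1 := by linear_combination β * hsum - hprod
  suffices ∀ n, (fib n : R) * (α - β) = α ^ n - β ^ n ∧
      (fib (n + 1) : R) * (α - β) = α ^ (n + 1) - β ^ (n + 1) from (this n).1
  intro n
  induction n with
  | zero => simp
  | succ n ih =>
    refine ⟨ih.2, ?_⟩
    rw [Nat.fib_add_two]
    push_cast
    linear_combination ih.1 + ih.2 - α ^ n * hα + β ^ n * hβ

theorem dvd_fib_sub_one_or_dvd_fib_add_one_of_sq_eq {K : Type*} [Field K] (p : ℕ) [Fact p.Prime]
    [CharP K p] {α : K} (hα : α ^ 2 = α + 1) (h5 : (5 : K) ≠ 0) :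
    p ∣ fib (p - 1) ∨ p ∣ fib (p + 1) := by
  set β := 1 - α with hβ
  have hsum : α + β = 1 := by ring
  have hprod : α * β = -1 := by linear_combination -hα
  have hαβ : α - β ≠ 0 := fun h => h5 <| by
    rw [hβ] at h
    linear_combination (2 * α - 1) * h - 4 * hα
  have hα0 : α ≠ 0 := by rintro rfl; simp at hprod
  have hβ0 : β ≠ 0 := by rintro h; simp [h] at hprod
  have hdvd : ∀ m, α ^ m = β ^ m → p ∣ fib m := fun m h =>
    (CharP.cast_eq_zero_iff K p _).1 <| (mul_eq_zero.1 <| by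
      rw [Nat.cast_fib_mul_sub_eq_pow_sub_pow hsum hprod, h, sub_self]).resolve_right hαβ
  -- Frobenius permutes the two roots `α, β` of `x² = x + 1`.
  have hβp : β ^ p = 1 - α ^ p := by rw [hβ, sub_pow_char, one_pow]
  have hroot : (α ^ p - α) * (α ^ p - β) = 0 := by
    have : (α ^ p) ^ 2 = α ^ p + 1 := by
      rw [← pow_mul, mul_comm, pow_mul, hα, add_pow_char, one_pow]
    linear_combination this - α ^ p * hsum + hprod
  have hp1 : p - 1 + 1 = p := Nat.sub_add_cancel (Fact.out : p.Prime).one_le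
  rcases mul_eq_zero.1 hroot with h | h
  · left
    have hfix : ∀ γ : K, γ ≠ 0 → γ ^ p = γ → γ ^ (p - 1) = 1 := fun γ hγ hγp =>
      mul_right_cancel₀ hγ (by rw [← pow_succ, hp1, hγp, one_mul])
    refine hdvd _ ?_
    rw [hfix α hα0 (sub_eq_zero.1 h), hfix β hβ0 (by rw [hβp, sub_eq_zero.1 h])]
  · right
    refine hdvd _ ?_
    rw [pow_succ, pow_succ, sub_eq_zero.1 h, hβp, sub_eq_zero.1 h]
    linear_combination β * hsum

theorem Nat.Prime.dvd_fib_sub_one_or_dvd_fib_add_one {p : ℕ} (hp : p.Prime) (h5 : p ≠ 5) :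
    p ∣ fib (p - 1) ∨ p ∣ fib (p + 1) := by
  have := Fact.mk hp
  obtain ⟨α, hα⟩ := IsAlgClosed.exists_root (X ^ 2 - X - 1 : (AlgebraicClosure (ZMod p))[X])
    (by rw [show (X ^ 2 - X - 1 : (AlgebraicClosure (ZMod p))[X]).degree = 2 by compute_degree!]
        decide)
  refine dvd_fib_sub_one_or_dvd_fib_add_one_of_sq_eq p (α := α) ?_ ?_
  · simp only [IsRoot, eval_sub, eval_pow, eval_X, eval_one] at hα
    linear_combination hα
  · rw [Ne, ← Nat.cast_ofNat, CharP.cast_eq_zero_iff _ p]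
    exact fun h => h5 ((Nat.prime_dvd_prime_iff_eq hp Nat.prime_five).1 h)

theorem exists_pos_dvd_fib {n : ℕ} (hn : n ≠ 0) : ∃ ℓ, 0 < ℓ ∧ n ∣ fib ℓ := by
  have : NeZero n := ⟨hn⟩
  -- The step `(a, b) ↦ (b, a + b)` permutes the finite set `(ℤ/n)²`, so it has finite order.
  let σ : Equiv.Perm (ZMod n × ZMod n) :=
    { toFun := fun x => (x.2, x.1 + x.2)
      invFun := fun x => (x.2 - x.1, x.1)
      left_inv := fun x => by simp
      right_inv := fun x => by simp }
  have hσ : ∀ k, (σ ^ k) (0, 1) = ((fib k : ZMod n), (fib (k + 1) : ZMod n)) := by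
    intro k
    induction k with
    | zero => simp
    | succ k ih =>
      rw [pow_succ', Equiv.Perm.mul_apply, ih]
      simp [σ, Nat.fib_add_two]
  refine ⟨orderOf σ, orderOf_pos σ, (ZMod.natCast_eq_zero_iff _ _).1 ?_⟩
  have h := congrArg Prod.fst (hσ (orderOf σ))
  rw [pow_orderOf_eq_one] at h
  exact h.symm

section OrderOfAppearance

variable {n m ℓ p q P : ℕ}

theorem z_pos_and_dvd_fib (hn : n ≠ 0) : 0 < z n ∧ n ∣ fib (z n) :=
  Nat.sInf_mem (exists_pos_dvd_fib hn)

theorem z_pos (hn : n ≠ 0) : 0 < z n := (z_pos_and_dvd_fib hn).1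

theorem dvd_fib_z (hn : n ≠ 0) : n ∣ fib (z n) := (z_pos_and_dvd_fib hn).2

theorem z_le (hℓ : 0 < ℓ) (h : n ∣ fib ℓ) : z n ≤ ℓ := Nat.sInf_le ⟨hℓ, h⟩

theorem z_eq_of_forall_lt (hℓ : 0 < ℓ) (h : n ∣ fib ℓ) (hmin : ∀ l < ℓ, 0 < l → ¬ n ∣ fib l) :
    z n = ℓ :=
  le_antisymm (z_le hℓ h) <|
    le_csInf ⟨ℓ, hℓ, h⟩ fun l ⟨hl, hdvd⟩ => not_lt.1 fun hlt => hmin l hlt hl hdvd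

theorem z_dvd_iff (hn : n ≠ 0) : z n ∣ ℓ ↔ n ∣ fib ℓ := by
  refine ⟨fun h => (dvd_fib_z hn).trans (Nat.fib_dvd _ _ h), fun h => ?_⟩
  rcases ℓ.eq_zero_or_pos with rfl | hℓ
  · exact dvd_zero _
  have hgcd : n ∣ fib ((z n).gcd ℓ) := by
    rw [Nat.fib_gcd]
    exact Nat.dvd_gcd (dvd_fib_z hn) h
  have : (z n).gcd ℓ = z n :=
    le_antisymm (Nat.le_of_dvd (z_pos hn) (Nat.gcd_dvd_left _ _))
      (z_le (Nat.gcd_pos_of_pos_right _ hℓ) hgcd)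
  exact this ▸ Nat.gcd_dvd_right _ _

theorem z_one : z 1 = 1 := z_eq_of_forall_lt one_pos (one_dvd _) (by decide)
theorem z_two : z 2 = 3 := z_eq_of_forall_lt (by norm_num) (by decide) (by decide)
theorem z_three : z 3 = 4 := z_eq_of_forall_lt (by norm_num) (by decide) (by decide)
theorem z_four : z 4 = 6 := z_eq_of_forall_lt (by norm_num) (by decide) (by decide)
theorem z_five : z 5 = 5 := z_eq_of_forall_lt (by norm_num) (by decide) (by decide)
theorem z_six : z 6 = 12 := z_eq_of_forall_lt (by norm_num) (by decide) (by decide)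
theorem z_twelve : z 12 = 12 := z_eq_of_forall_lt (by norm_num) (by decide) (by decide)

theorem z_mul_of_coprime (hmn : m.Coprime n) (hm : m ≠ 0) (hn : n ≠ 0) :
    z (m * n) = (z m).lcm (z n) := by
  have hmn0 : m * n ≠ 0 := mul_ne_zero hm hn
  refine Nat.dvd_antisymm ?_ (Nat.lcm_dvd ?_ ?_)
  · rw [z_dvd_iff hmn0]
    exact hmn.mul_dvd_of_dvd_of_dvd ((z_dvd_iff hm).1 (Nat.dvd_lcm_left _ _))
      ((z_dvd_iff hn).1 (Nat.dvd_lcm_right _ _))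
  · exact (z_dvd_iff hm).2 ((dvd_mul_right m n).trans (dvd_fib_z hmn0))
  · exact (z_dvd_iff hn).2 ((dvd_mul_left n m).trans (dvd_fib_z hmn0))

theorem z_mul_dvd (hn : n ≠ 0) (hp : p ∣ n) : z (p * n) ∣ p * z n :=
  (z_dvd_iff (mul_ne_zero (ne_zero_of_dvd_ne_zero hn hp) hn)).2
    (Nat.mul_dvd_fib_mul p (dvd_fib_z hn) hp)

theorem z_pow_dvd (hp : p ≠ 0) (a : ℕ) : z (p ^ a) ∣ p ^ (a - 1) * z p := by
  induction a with
  | zero => simp [z_one]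
  | succ a ih =>
    rcases a.eq_zero_or_pos with rfl | ha
    · simp
    calc z (p ^ (a + 1)) = z (p * p ^ a) := by rw [pow_succ']
      _ ∣ p * z (p ^ a) := z_mul_dvd (pow_ne_zero a hp) (dvd_pow_self p ha.ne')
      _ ∣ p * (p ^ (a - 1) * z p) := mul_dvd_mul_left p ih
      _ = p ^ (a + 1 - 1) * z p := by
        rw [Nat.add_sub_cancel, ← mul_assoc, ← pow_succ', Nat.sub_add_cancel ha]

theorem z_five_pow_dvd (c : ℕ) : z (5 ^ c) ∣ 5 ^ c := by
  cases c with
  | zero => simp [z_one]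
  | succ c => simpa [z_five, pow_succ] using z_pow_dvd (p := 5) (by norm_num) (c + 1)

theorem exists_prime_dvd_of_prime_dvd_z (hq : q.Prime) (hn : n ≠ 0) (h : q ∣ z n) :
    ∃ p, p.Prime ∧ p ∣ n ∧ (q = p ∨ q ∣ z p) := by
  induction n using Nat.strong_induction_on with
  | _ n ih =>
  rcases eq_or_ne n 1 with rfl | hn1
  · rw [z_one] at h
    exact absurd (Nat.le_of_dvd one_pos h) hq.one_lt.not_ge
  obtain ⟨p, hp, m, rfl⟩ := Nat.exists_prime_and_dvd hn1
  have hm : m ≠ 0 := right_ne_zero_of_mul hn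
  obtain ⟨x, hx, hzx⟩ : ∃ x, (q ∣ x → q = p ∨ q ∣ z p) ∧ z (p * m) ∣ x * z m := by
    by_cases hpm : p ∣ m
    · exact ⟨p, fun h => Or.inl ((Nat.prime_dvd_prime_iff_eq hq hp).1 h), z_mul_dvd hm hpm⟩
    · refine ⟨z p, Or.inr, ?_⟩
      rw [z_mul_of_coprime ((Nat.Prime.coprime_iff_not_dvd hp).2 hpm) hp.ne_zero hm]
      exact Nat.lcm_dvd_mul _ _
  rcases hq.dvd_mul.1 (h.trans hzx) with h | h
  · exact ⟨p, hp, dvd_mul_right p m, hx h⟩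
  · obtain ⟨r, hr, hrm, hqr⟩ := ih m (lt_mul_left (Nat.pos_of_ne_zero hm) hp.one_lt) hm h
    exact ⟨r, hr, hrm.trans (dvd_mul_left m p), hqr⟩

theorem z_dvd_sub_one_or_z_dvd_add_one (hp : p.Prime) (h5 : p ≠ 5) : z p ∣ p - 1 ∨ z p ∣ p + 1 :=
  (hp.dvd_fib_sub_one_or_dvd_fib_add_one h5).imp (z_dvd_iff hp.ne_zero).2 (z_dvd_iff hp.ne_zero).2

theorem lt_or_eq_three_of_prime_dvd_z (hp : p.Prime) (h5 : p ≠ 5) (hq : q.Prime) (h : q ∣ z p) :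
    q < p ∨ q = 3 := by
  rcases z_dvd_sub_one_or_z_dvd_add_one hp h5 with hz | hz
  · exact Or.inl ((Nat.le_of_dvd (by have := hp.two_le; omega) (h.trans hz)).trans_lt
      (by have := hp.two_le; omega))
  have hle := Nat.le_of_dvd p.succ_pos (h.trans hz)
  have hne : q ≠ p := by
    rintro rfl
    exact hq.one_lt.ne' (Nat.dvd_one.1 ((Nat.dvd_add_right dvd_rfl).1 (h.trans hz)))
  -- `p` and `q = p + 1` cannot both be prime unless `p = 2`.
  have hsucc : q = p + 1 → q = 3 := by
    rintro rfl
    rcases hp.eq_two_or_odd' with rfl | hodd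
    · rfl
    · have := (hq.even_iff).1 hodd.add_one
      have := hp.two_le
      omega
  omega

theorem prime_le_of_dvd_z (h5 : 5 ≤ P) (hn : n ≠ 0) (hnP : ∀ p, p.Prime → p ∣ n → p ≤ P)
    (hq : q.Prime) (h : q ∣ z n) : q ≤ P := by
  obtain ⟨p, hp, hpn, rfl | hqp⟩ := exists_prime_dvd_of_prime_dvd_z hq hn h
  · exact hnP q hp hpn
  by_cases hp5 : p = 5
  · subst hp5
    rw [z_five] at hqp
    exact (Nat.le_of_dvd (by norm_num) hqp).trans h5
  rcases lt_or_eq_three_of_prime_dvd_z hp hp5 hq hqp with hlt | rfl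
  · exact hlt.le.trans (hnP p hp hpn)
  · omega

theorem not_dvd_z_of_le (hP : P.Prime) (h7 : 7 ≤ P) (hp : p.Prime) (hpP : p ≤ P) : ¬ P ∣ z p := by
  intro h
  by_cases hp5 : p = 5
  · subst hp5
    rw [z_five] at h
    have := Nat.le_of_dvd (by norm_num) h
    omega
  rcases lt_or_eq_three_of_prime_dvd_z hp hp5 hP h with hlt | rfl <;> omega

theorem factorization_z_lt (hP : P.Prime) (h7 : 7 ≤ P) (hn : n ≠ 0)
    (hnP : ∀ p, p.Prime → p ∣ n → p ≤ P) (hPn : P ∣ n) :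
    (z n).factorization P < n.factorization P := by
  set a := n.factorization P
  set m := ordCompl[P] n
  have hm : m ≠ 0 := (Nat.ordCompl_pos P hn).ne'
  have hzm : ¬ P ∣ z m := fun h => by
    obtain ⟨p, hp, hpm, rfl | hPp⟩ := exists_prime_dvd_of_prime_dvd_z hP hm h
    · exact Nat.not_dvd_ordCompl hP hn hpm
    · exact not_dvd_z_of_le hP h7 hp (hnP p hp (hpm.trans (Nat.ordCompl_dvd n P))) hPp
  have hcop : ¬ P ∣ z P * z m := fun h =>
    (hP.dvd_mul.1 h).elim (not_dvd_z_of_le hP h7 hP le_rfl) hzm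
  have hz : z n ∣ P ^ (a - 1) * (z P * z m) := calc
    z n = z (P ^ a * m) := by rw [Nat.ordProj_mul_ordCompl_eq_self]
    _ = (z (P ^ a)).lcm (z m) :=
      z_mul_of_coprime ((Nat.coprime_ordCompl hP hn).pow_left a) (pow_ne_zero a hP.ne_zero) hm
    _ ∣ z (P ^ a) * z m := Nat.lcm_dvd_mul _ _
    _ ∣ P ^ (a - 1) * z P * z m := Nat.mul_dvd_mul_right (z_pow_dvd hP.ne_zero a) _
    _ = P ^ (a - 1) * (z P * z m) := mul_assoc _ _ _
  have ha : 0 < a := hP.factorization_pos_of_dvd hn hPn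
  by_contra! hle
  have hPa : P ^ (a - 1) * P ∣ P ^ (a - 1) * (z P * z m) := by
    rw [← pow_succ, Nat.sub_add_cancel ha]
    exact ((hP.pow_dvd_iff_le_factorization (z_pos hn).ne').2 hle).trans hz
  exact hcop (Nat.dvd_of_mul_dvd_mul_left (pow_pos hP.pos _) hPa)

theorem exists_eq_two_pow_mul_three_pow_mul_five_pow (hn : n ≠ 0)
    (h : ∀ p, p.Prime → p ∣ n → p ≤ 5) : ∃ a b c, n = 2 ^ a * 3 ^ b * 5 ^ c := by
  refine ⟨n.factorization 2, n.factorization 3, n.factorization 5, ?_⟩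
  conv_lhs => rw [← Nat.prod_factorization_pow_eq_self hn]
  rw [Nat.prod_factorization_eq_prod_primeFactors, Finset.prod_subset (s₂ := {2, 3, 5})]
  · simp [mul_assoc]
  · intro p hp
    have hp' := Nat.prime_of_mem_primeFactors hp
    have := h p hp' (Nat.dvd_of_mem_primeFactors hp)
    have := hp'.two_le
    interval_cases p <;> simp_all +decide
  · intro p _ hp
    rw [Finsupp.notMem_support_iff.1 (by rwa [Nat.support_factorization]), pow_zero]

theorem exists_eq_of_dvd_two_pow_mul_three_pow_mul_five_pow {m A B C : ℕ}
    (h : m ∣ 2 ^ A * 3 ^ B * 5 ^ C) : ∃ a ≤ A, ∃ b ≤ B, ∃ c ≤ C, m = 2 ^ a * 3 ^ b * 5 ^ c := by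
  obtain ⟨x, w, hx, hw, rfl⟩ := Nat.dvd_mul.1 h
  obtain ⟨u, v, hu, hv, rfl⟩ := Nat.dvd_mul.1 hx
  obtain ⟨a, ha, rfl⟩ := (Nat.dvd_prime_pow Nat.prime_two).1 hu
  obtain ⟨b, hb, rfl⟩ := (Nat.dvd_prime_pow Nat.prime_three).1 hv
  obtain ⟨c, hc, rfl⟩ := (Nat.dvd_prime_pow Nat.prime_five).1 hw
  exact ⟨a, ha, b, hb, c, hc, rfl⟩

theorem z_two_pow_mul_three_pow_mul_five_pow_dvd (a b c : ℕ) :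
    z (2 ^ a * 3 ^ b * 5 ^ c) ∣ 2 ^ max (a - 1) 2 * 3 ^ max (b - 1) 1 * 5 ^ c := by
  rw [z_dvd_iff (by positivity)]
  have h2 : 2 ^ a ∣ fib (2 ^ max (a - 1) 2 * 3 ^ max (b - 1) 1 * 5 ^ c) := by
    refine (z_dvd_iff (by positivity)).1 ((z_pow_dvd two_ne_zero a).trans ?_)
    rw [z_two]
    exact (mul_dvd_mul (pow_dvd_pow 2 (le_max_left _ _)) (dvd_pow_self 3 (by omega))).mul_right _
  have h3 : 3 ^ b ∣ fib (2 ^ max (a - 1) 2 * 3 ^ max (b - 1) 1 * 5 ^ c) := by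
    refine (z_dvd_iff (by positivity)).1 ((z_pow_dvd three_ne_zero b).trans ?_)
    rw [z_three, mul_comm, show 4 = 2 ^ 2 by rfl]
    exact (mul_dvd_mul (pow_dvd_pow 2 (le_max_right _ _))
      (pow_dvd_pow 3 (le_max_left _ _))).mul_right _
  have h5 : 5 ^ c ∣ fib (2 ^ max (a - 1) 2 * 3 ^ max (b - 1) 1 * 5 ^ c) :=
    (z_dvd_iff (by positivity)).1 ((z_five_pow_dvd c).trans (dvd_mul_left _ _))
  have hcop23 : (2 ^ a).Coprime (3 ^ b) := Nat.Coprime.pow _ _ (by norm_num)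
  have hcop5 : (2 ^ a * 3 ^ b).Coprime (5 ^ c) :=
    Nat.Coprime.mul_left (Nat.Coprime.pow _ _ (by norm_num)) (Nat.Coprime.pow _ _ (by norm_num))
  exact hcop5.mul_dvd_of_dvd_of_dvd (hcop23.mul_dvd_of_dvd_of_dvd h2 h3) h5

theorem reachesFixedPt_z_mul_five_pow {d : ℕ} (hd : d ∣ 12) (c : ℕ) :
    ReachesFixedPt z (d * 5 ^ c) := by
  induction c using Nat.strong_induction_on generalizing d with
  | _ c ih =>
  have step : ∀ {d}, d ∣ 12 → z d ∣ 12 → (z d = d ∨ ReachesFixedPt z (z d * 5 ^ c)) →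
      ReachesFixedPt z (d * 5 ^ c) := by
    intro d hd hzd h
    obtain ⟨j, hj, hzc⟩ := (Nat.dvd_prime_pow Nat.prime_five).1 (z_five_pow_dvd c)
    have hcop : ∀ {e}, e ∣ 12 → ∀ i, e.Coprime (5 ^ i) := fun he i =>
      (Nat.Coprime.coprime_dvd_left he (by norm_num)).pow_right i
    have hz : z (d * 5 ^ c) = z d * 5 ^ j := by
      rw [z_mul_of_coprime (hcop hd c) (ne_zero_of_dvd_ne_zero (by norm_num) hd) (by positivity),
        hzc, (hcop hzd j).lcm_eq_mul]
    rcases hj.lt_or_eq with hj | rfl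
    · exact ReachesFixedPt.of_apply (by rw [hz]; exact ih j hj hzd)
    rcases h with h | h
    · exact IsFixedPt.reachesFixedPt (by rw [IsFixedPt, hz, h])
    · exact ReachesFixedPt.of_apply (by rw [hz]; exact h)
  have h1 := step (d := 1) (by norm_num) (by rw [z_one]; norm_num) (Or.inl z_one)
  have h12 := step (d := 12) dvd_rfl (by rw [z_twelve]) (Or.inl z_twelve)
  have h6 := step (d := 6) (by norm_num) (by rw [z_six]) (Or.inr (z_six ▸ h12))
  have h4 := step (d := 4) (by norm_num) (by rw [z_four]; norm_num) (Or.inr (z_four ▸ h6))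
  have h3 := step (d := 3) (by norm_num) (by rw [z_three]; norm_num) (Or.inr (z_three ▸ h4))
  have h2 := step (d := 2) (by norm_num) (by rw [z_two]; norm_num) (Or.inr (z_two ▸ h3))
  have hd' : d ∈ Nat.divisors 12 := Nat.mem_divisors.2 ⟨hd, by norm_num⟩
  rw [show Nat.divisors 12 = {1, 2, 3, 4, 6, 12} by decide] at hd'
  simp only [Finset.mem_insert, Finset.mem_singleton] at hd'
  rcases hd' with rfl | rfl | rfl | rfl | rfl | rfl <;> assumption

theorem reachesFixedPt_z_two_pow_mul_three_pow_mul_five_pow (a b c : ℕ) :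
    ReachesFixedPt z (2 ^ a * 3 ^ b * 5 ^ c) := by
  by_cases hab : a ≤ 2 ∧ b ≤ 1
  · exact reachesFixedPt_z_mul_five_pow
      (Nat.mul_dvd_mul (pow_dvd_pow 2 hab.1) (pow_dvd_pow 3 hab.2) : _ ∣ 2 ^ 2 * 3 ^ 1) c
  obtain ⟨a', ha', b', hb', c', -, hz⟩ :=
    exists_eq_of_dvd_two_pow_mul_three_pow_mul_five_pow
      (z_two_pow_mul_three_pow_mul_five_pow_dvd a b c)
  exact ReachesFixedPt.of_apply (hz ▸ reachesFixedPt_z_two_pow_mul_three_pow_mul_five_pow a' b' c')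
termination_by (a - 2) + (b - 1)
decreasing_by omega

theorem reachesFixedPt_z_of_largest_prime (hP : P.Prime) (h7 : 7 ≤ P)
    (hbase : ∀ n, n ≠ 0 → (∀ p, p.Prime → p ∣ n → p ≤ P) → ¬ P ∣ n → ReachesFixedPt z n)
    (n : ℕ) (hn : n ≠ 0) (hnP : ∀ p, p.Prime → p ∣ n → p ≤ P) : ReachesFixedPt z n := by
  by_cases hPn : P ∣ n
  · exact ReachesFixedPt.of_apply <| reachesFixedPt_z_of_largest_prime hP h7 hbase (z n)
      (z_pos hn).ne' fun q hq h => prime_le_of_dvd_z (by omega) hn hnP hq h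
  · exact hbase n hn hnP hPn
termination_by n.factorization P
decreasing_by exact factorization_z_lt hP h7 hn hnP hPn

theorem reachesFixedPt_z_of_forall_prime_dvd_le (P : ℕ) (hn : n ≠ 0)
    (hnP : ∀ p, p.Prime → p ∣ n → p ≤ P) : ReachesFixedPt z n := by
  induction P using Nat.strong_induction_on generalizing n with
  | _ P ih =>
  by_cases h5 : P ≤ 5
  · obtain ⟨a, b, c, rfl⟩ :=
      exists_eq_two_pow_mul_three_pow_mul_five_pow hn fun p hp hpn => (hnP p hp hpn).trans h5
    exact reachesFixedPt_z_two_pow_mul_three_pow_mul_five_pow a b c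
  by_cases hP : P.Prime
  · have h7 : 7 ≤ P := by
      have : P ≠ 6 := by rintro rfl; norm_num at hP
      omega
    refine reachesFixedPt_z_of_largest_prime hP h7 (fun m hm hmP hPm => ?_) n hn hnP
    exact ih (P - 1) (by omega) hm fun p hp hpm =>
      Nat.le_sub_one_of_lt ((hmP p hp hpm).lt_of_ne (by rintro rfl; exact hPm hpm))
  · exact ih (P - 1) (by omega) hn fun p hp hpn =>
      Nat.le_sub_one_of_lt ((hnP p hp hpn).lt_of_ne (by rintro rfl; exact hP hp))

end OrderOfAppearance

theorem all_reach_fixed_point (n : ℕ) (hn : 0 < n) :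
    ∃ k : ℕ, z (z^[k] n) = z^[k] n :=
  reachesFixedPt_z_of_forall_prime_dvd_le n hn.ne' fun _ _ hpn => Nat.le_of_dvd hn hpn
end
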